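/- arXiv:2102.03224 — 2 statements merged into one kernel-verified Lean document; each statement's English description precedes it below -/
import Mathlib

section
/- For any nonzero k ∈ ℝ³ and real constants c ≠ 0 and m > 0, the eigenvalues of the operator Λ(k) = (M(k)/c + c·Id)² + m·Id restricted to the subspace {v ∈ ℂ³ : k ⋅ v = 0} are (|k|/c + c)² + m and (-|k|/c + c)² + m, and both are ≥ m > 0; in particular Λ(k) is invertible on this subspace. -/
open Matrix Complex

/-- The symbol of the curl operator: `M(k) v = i (k × v)`. -/
def curlSymbol (k : Fin 3 → ℝ) : Matrix (Fin 3) (Fin 3) ℂ :=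
  !![0, -Complex.I * (k 2), Complex.I * (k 1);
     Complex.I * (k 2), 0, -Complex.I * (k 0);
     -Complex.I * (k 1), Complex.I * (k 0), 0]

/-- The Euclidean norm of `k ∈ ℝ³`. -/
noncomputable def enorm3 (k : Fin 3 → ℝ) : ℝ :=
  Real.sqrt (k 0 ^ 2 + k 1 ^ 2 + k 2 ^ 2)

/-- The symbol `Λ(k) = (M(k)/c + c·Id)² + m·Id` of the operator `Λ`. -/
noncomputable def lambdaSymbol (k : Fin 3 → ℝ) (c m : ℝ) : Matrix (Fin 3) (Fin 3) ℂ :=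
  ((c : ℂ)⁻¹ • curlSymbol k + (c : ℂ) • 1) ^ 2 + (m : ℂ) • 1

/-!
On `k^⊥ = {v : k ⬝ v = 0}` the curl symbol `K v = i (k × v)` satisfies `K² = |k|²` by the vector
triple product, and for a real nonzero `u ∈ k^⊥` the vectors `K u ± |k| u` are eigenvectors of `K`
for `±|k|`. As `Λ(k) = (K/c + c)² + m` is a polynomial in `K`, its eigenvalues on `k^⊥` are
`(±|k|/c + c)² + m ≥ m > 0`. So `Λ(k)` is injective on the finite-dimensional invariant subspace
`k^⊥`, hence bijective there.
-/

lemma LinearMap.surjOn_of_mapsTo_of_injOn {K V : Type*} [DivisionRing K] [AddCommGroup V]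
    [Module K V] [FiniteDimensional K V] {f : V →ₗ[K] V} {W : Submodule K V}
    (hW : Set.MapsTo f W W) (hinj : Set.InjOn f W) : Set.SurjOn f W W := by
  intro w hw
  have hg : Function.Injective (f.restrict hW) := fun x y hxy =>
    Subtype.ext (hinj x.2 y.2 (congrArg Subtype.val hxy))
  obtain ⟨v, hv⟩ := LinearMap.injective_iff_surjective.mp hg ⟨w, hw⟩
  exact ⟨v, v.2, congrArg Subtype.val hv⟩

lemma curlSymbol_mulVec (k : Fin 3 → ℝ) (v : Fin 3 → ℂ) :
    curlSymbol k *ᵥ v = I • ((fun i => (k i : ℂ)) ⨯₃ v) := by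
  ext i
  fin_cases i <;> simp [curlSymbol, cross_apply, mulVec, dotProduct, Fin.sum_univ_three] <;> ring

def transverseSubspace (k : Fin 3 → ℝ) : Submodule ℂ (Fin 3 → ℂ) :=
  LinearMap.ker (dotProductBilin ℂ ℂ fun i => (k i : ℂ))

lemma mem_transverseSubspace {k : Fin 3 → ℝ} {v : Fin 3 → ℂ} :
    v ∈ transverseSubspace k ↔ (fun i => (k i : ℂ)) ⬝ᵥ v = 0 :=
  Iff.rfl

lemma curlSymbol_mulVec_mem_transverseSubspace (k : Fin 3 → ℝ) (v : Fin 3 → ℂ) :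
    curlSymbol k *ᵥ v ∈ transverseSubspace k := by
  rw [mem_transverseSubspace, curlSymbol_mulVec, dotProduct_smul, dot_self_cross, smul_zero]

lemma enorm3_sq (k : Fin 3 → ℝ) : enorm3 k ^ 2 = k ⬝ᵥ k := by
  rw [enorm3, Real.sq_sqrt (by positivity)]
  simp [dotProduct, Fin.sum_univ_three, sq]

lemma enorm3_ne_zero {k : Fin 3 → ℝ} (hk : k ≠ 0) : enorm3 k ≠ 0 := by
  rw [← pow_ne_zero_iff two_ne_zero, enorm3_sq]
  exact mt dotProduct_self_eq_zero.mp hk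

lemma dotProduct_ofReal_self (k : Fin 3 → ℝ) :
    (fun i => (k i : ℂ)) ⬝ᵥ (fun i => (k i : ℂ)) = (enorm3 k : ℂ) ^ 2 := by
  rw [← ofReal_pow, enorm3_sq]
  exact (RingHom.map_dotProduct ofRealHom k k).symm

lemma curlSymbol_mulVec_mulVec_of_mem {k : Fin 3 → ℝ} {v : Fin 3 → ℂ}
    (hv : v ∈ transverseSubspace k) :
    curlSymbol k *ᵥ (curlSymbol k *ᵥ v) = (enorm3 k : ℂ) ^ 2 • v := by
  rw [mem_transverseSubspace] at hv
  rw [curlSymbol_mulVec, curlSymbol_mulVec, map_smul, cross_cross_eq_smul_sub_smul', smul_smul,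
    ← sq, I_sq, dotProduct_ofReal_self, hv]
  simp

lemma lambdaSymbol_mulVec {c : ℝ} (hc : c ≠ 0) (k : Fin 3 → ℝ) (m : ℝ) (v : Fin 3 → ℂ) :
    lambdaSymbol k c m *ᵥ v = (c : ℂ)⁻¹ ^ 2 • curlSymbol k *ᵥ (curlSymbol k *ᵥ v)
      + (2 : ℂ) • curlSymbol k *ᵥ v + ((c : ℂ) ^ 2 + m) • v := by
  have hc' : (c : ℂ) ≠ 0 := ofReal_ne_zero.mpr hc
  simp only [lambdaSymbol, sq, add_mulVec, ← mulVec_mulVec, smul_mulVec, one_mulVec, mulVec_add,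
    mulVec_smul]
  match_scalars <;> field_simp
  ring

lemma lambdaSymbol_mulVec_of_curlSymbol_mulVec_eq {c : ℝ} (hc : c ≠ 0) {k : Fin 3 → ℝ} (m : ℝ)
    {v : Fin 3 → ℂ} {s : ℂ} (h : curlSymbol k *ᵥ v = s • v) :
    lambdaSymbol k c m *ᵥ v = ((s / c + c) ^ 2 + m) • v := by
  have hc' : (c : ℂ) ≠ 0 := ofReal_ne_zero.mpr hc
  rw [lambdaSymbol_mulVec hc, h, mulVec_smul, h, smul_smul]
  match_scalars
  field_simp
  ring

lemma lambdaSymbol_mulVec_of_mem {c : ℝ} (hc : c ≠ 0) {k : Fin 3 → ℝ} (m : ℝ) {v : Fin 3 → ℂ}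
    (hv : v ∈ transverseSubspace k) :
    lambdaSymbol k c m *ᵥ v =
      ((enorm3 k / c : ℂ) ^ 2 + c ^ 2 + m) • v + (2 : ℂ) • curlSymbol k *ᵥ v := by
  rw [lambdaSymbol_mulVec hc, curlSymbol_mulVec_mulVec_of_mem hv]
  module

lemma lambdaSymbol_mulVec_mem_transverseSubspace {c : ℝ} (hc : c ≠ 0) {k : Fin 3 → ℝ} (m : ℝ)
    {v : Fin 3 → ℂ} (hv : v ∈ transverseSubspace k) :
    lambdaSymbol k c m *ᵥ v ∈ transverseSubspace k := by
  rw [lambdaSymbol_mulVec_of_mem hc m hv]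
  exact add_mem (Submodule.smul_mem _ _ hv)
    (Submodule.smul_mem _ _ (curlSymbol_mulVec_mem_transverseSubspace k v))

lemma exists_curlSymbol_eigenvector {k : Fin 3 → ℝ} {s : ℝ} (hs0 : s ≠ 0)
    (hs : s ^ 2 = enorm3 k ^ 2) :
    ∃ v ≠ 0, v ∈ transverseSubspace k ∧ curlSymbol k *ᵥ v = (s : ℂ) • v := by
  obtain ⟨u, hu0, hku⟩ := exists_ne_zero_dotProduct_eq_zero k
  obtain ⟨j, huj⟩ := Function.ne_iff.mp hu0
  set uc : Fin 3 → ℂ := ofRealHom ∘ u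
  have huc : uc ∈ transverseSubspace k := by
    change ofRealHom ∘ k ⬝ᵥ uc = 0
    rw [← RingHom.map_dotProduct, dotProduct_comm, hku, map_zero]
  -- `curlSymbol k *ᵥ uc` is purely imaginary while `s • uc` is real and nonzero
  have hre : ((curlSymbol k *ᵥ uc + (s : ℂ) • uc) j).re = s * u j := by
    rw [curlSymbol_mulVec]
    fin_cases j <;> simp [cross_apply, uc]
  refine ⟨curlSymbol k *ᵥ uc + (s : ℂ) • uc, fun h => ?_, ?_, ?_⟩
  · rw [h] at hre
    exact mul_ne_zero hs0 huj (by simpa using hre.symm)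
  · exact add_mem (curlSymbol_mulVec_mem_transverseSubspace k uc) (Submodule.smul_mem _ _ huc)
  · rw [mulVec_add, mulVec_smul, curlSymbol_mulVec_mulVec_of_mem huc, ← ofReal_pow, ← hs]
    match_scalars <;> ring

lemma sq_eq_of_curlSymbol_mulVec_eq {k : Fin 3 → ℝ} {v : Fin 3 → ℂ} {s : ℂ} (hv0 : v ≠ 0)
    (hv : v ∈ transverseSubspace k) (h : curlSymbol k *ᵥ v = s • v) :
    s ^ 2 = (enorm3 k : ℂ) ^ 2 := by
  refine smul_left_injective ℂ hv0 ?_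
  calc s ^ 2 • v = curlSymbol k *ᵥ (curlSymbol k *ᵥ v) := by rw [h, mulVec_smul, h, smul_smul, sq]
    _ = (enorm3 k : ℂ) ^ 2 • v := curlSymbol_mulVec_mulVec_of_mem hv

lemma lambdaSymbol_hasEigenvector_iff {k : Fin 3 → ℝ} (hk : k ≠ 0) {c : ℝ} (hc : c ≠ 0) (m : ℝ)
    (μ : ℂ) :
    (∃ v ≠ 0, v ∈ transverseSubspace k ∧ lambdaSymbol k c m *ᵥ v = μ • v) ↔
      μ = (((enorm3 k / c + c) ^ 2 + m : ℝ) : ℂ) ∨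
        μ = (((-enorm3 k / c + c) ^ 2 + m : ℝ) : ℂ) := by
  have hr := enorm3_ne_zero hk
  constructor
  · rintro ⟨v, hv0, hv, hμ⟩
    set s := (μ - ((enorm3 k / c : ℂ) ^ 2 + c ^ 2 + m)) / 2
    have hs : curlSymbol k *ᵥ v = s • v := by
      have h := (lambdaSymbol_mulVec_of_mem hc m hv).symm.trans hμ
      linear_combination (norm := module) (2 : ℂ)⁻¹ • h
    have hμs : μ = (s / c + c) ^ 2 + m := by
      apply smul_left_injective ℂ hv0
      simp only [← hμ, lambdaSymbol_mulVec_of_curlSymbol_mulVec_eq hc m hs]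
    rcases sq_eq_sq_iff_eq_or_eq_neg.mp (sq_eq_of_curlSymbol_mulVec_eq hv0 hv hs) with h | h
    · left
      rw [hμs, h]
      push_cast
      ring
    · right
      rw [hμs, h]
      push_cast
      ring
  · rintro (hμ | hμ)
    · obtain ⟨v, hv0, hv, hs⟩ := exists_curlSymbol_eigenvector hr rfl
      refine ⟨v, hv0, hv, ?_⟩
      rw [lambdaSymbol_mulVec_of_curlSymbol_mulVec_eq hc m hs, hμ]
      push_cast
      rfl
    · obtain ⟨v, hv0, hv, hs⟩ := exists_curlSymbol_eigenvector (neg_ne_zero.mpr hr) (neg_sq _)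
      refine ⟨v, hv0, hv, ?_⟩
      rw [lambdaSymbol_mulVec_of_curlSymbol_mulVec_eq hc m hs, hμ]
      push_cast
      rfl

/-- for nonzero `k ∈ ℝ³`, `c ≠ 0`, `m > 0`, the eigenvalues of
`Λ(k) = (M(k)/c + c·Id)² + m·Id` on `{v ∈ ℂ³ : k ⋅ v = 0}` are
`(|k|/c + c)² + m` and `(-|k|/c + c)² + m`, both are `≥ m > 0`, and `Λ(k)` is
invertible on this subspace. -/
theorem lambdaSymbol_eigenvalues (k : Fin 3 → ℝ) (hk : k ≠ 0) (c m : ℝ)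
    (hc : c ≠ 0) (hm : 0 < m) :
    (∀ μ : ℂ,
      (∃ v : Fin 3 → ℂ, v ≠ 0 ∧ (∑ i, (k i : ℂ) * v i) = 0 ∧
        (lambdaSymbol k c m).mulVec v = μ • v) ↔
      (μ = (((enorm3 k / c + c) ^ 2 + m : ℝ) : ℂ) ∨
       μ = (((-(enorm3 k) / c + c) ^ 2 + m : ℝ) : ℂ))) ∧
    (m ≤ (enorm3 k / c + c) ^ 2 + m ∧ m ≤ (-(enorm3 k) / c + c) ^ 2 + m ∧ 0 < m) ∧
    (∀ w : Fin 3 → ℂ, (∑ i, (k i : ℂ) * w i) = 0 →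
      ∃ v : Fin 3 → ℂ, (∑ i, (k i : ℂ) * v i) = 0 ∧
        (lambdaSymbol k c m).mulVec v = w) ∧
    (∀ v : Fin 3 → ℂ, (∑ i, (k i : ℂ) * v i) = 0 →
      (lambdaSymbol k c m).mulVec v = 0 → v = 0) := by
  have heig := lambdaSymbol_hasEigenvector_iff hk hc m
  have hinj : ∀ v ∈ transverseSubspace k, lambdaSymbol k c m *ᵥ v = 0 → v = 0 := by
    intro v hv h0
    by_contra hv0
    have hpos (s : ℝ) : (((s / c + c) ^ 2 + m : ℝ) : ℂ) ≠ 0 :=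
      ofReal_ne_zero.mpr (by positivity)
    rcases (heig 0).mp ⟨v, hv0, hv, by rw [h0, zero_smul]⟩ with h | h
    exacts [hpos _ h.symm, hpos _ h.symm]
  have hsurj : Set.SurjOn (lambdaSymbol k c m).mulVecLin (transverseSubspace k)
      (transverseSubspace k) :=
    LinearMap.surjOn_of_mapsTo_of_injOn (fun _ => lambdaSymbol_mulVec_mem_transverseSubspace hc m)
      fun x hx y hy hxy => sub_eq_zero.mp <|
        hinj _ (sub_mem hx hy) (by rw [mulVec_sub]; exact sub_eq_zero.mpr hxy)
  exact ⟨heig, ⟨le_add_of_nonneg_left (sq_nonneg _), le_add_of_nonneg_left (sq_nonneg _), hm⟩,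
    fun w hw => hsurj hw, hinj⟩
end

section
/- Let Λ be a bounded positive self-adjoint operator with bounded inverse on a real inner product space V. Then the function C : V → ℝ defined by C(ξ) = exp(-½⟨Λ⁻¹ξ, ξ⟩) is positive definite: for any ξ₁,…,ξₙ ∈ V and complex numbers α₁,…,αₙ, one has Σᵢⱼ αᵢ·conj(αⱼ)·C(ξᵢ - ξⱼ) ≥ 0. -/
/-!
With `B = Λ⁻¹`, which is positive as the inverse of a positive operator, the matrix
`Mᵢⱼ = ⟪B ξᵢ, ξⱼ⟫` is positive semidefinite and `C(ξᵢ - ξⱼ) = dᵢ exp(Mᵢⱼ) dⱼ` with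
`dᵢ = exp(-½ Mᵢᵢ)`. By the Schur product theorem all entrywise powers of `M` are positive
semidefinite, hence so is its entrywise exponential, a convergent series of them with
nonnegative coefficients; conjugating by the diagonal matrix `d` preserves this.
-/

open scoped InnerProductSpace ComplexConjugate ComplexOrder

open Matrix

namespace ContinuousLinearMap

variable {𝕜 E : Type*} [RCLike 𝕜] [NormedAddCommGroup E] [InnerProductSpace 𝕜 E]

theorem IsPositive.of_comp_eq_id {T S : E →L[𝕜] E} (hT : T.IsPositive)
    (hTS : T.comp S = .id 𝕜 E) : S.IsPositive := by
  have hTS_apply (x : E) : T (S x) = x := congr($hTS x)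
  refine (isPositive_iff S).2 ⟨fun x y => ?_, fun x => ?_⟩
  · calc ⟪S x, y⟫_𝕜 = ⟪S x, T (S y)⟫_𝕜 := by rw [hTS_apply]
      _ = ⟪T (S x), S y⟫_𝕜 := (hT.inner_left_eq_inner_right _ _).symm
      _ = ⟪x, S y⟫_𝕜 := by rw [hTS_apply]
  · simpa only [hTS_apply] using hT.inner_nonneg_right (S x)

theorem IsPositive.posSemidef_of_inner {ι : Type*} [Fintype ι] {T : E →L[𝕜] E}
    (hT : T.IsPositive) (v : ι → E) : (Matrix.of fun i j => ⟪T (v i), v j⟫_𝕜).PosSemidef := by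
  refine .of_dotProduct_mulVec_nonneg ?_ fun x => ?_
  · ext i j
    simp [hT.inner_left_eq_inner_right]
  · have hquad : star x ⬝ᵥ (Matrix.of fun i j => ⟪T (v i), v j⟫_𝕜) *ᵥ x
        = ⟪T (∑ i, x i • v i), ∑ i, x i • v i⟫_𝕜 := by
      simp_rw [map_sum, map_smul, sum_inner, inner_sum, inner_smul_left, inner_smul_right,
        dotProduct, mulVec, dotProduct, Finset.mul_sum, of_apply, Pi.star_apply, RCLike.star_def]
      refine Finset.sum_congr rfl fun i _ => Finset.sum_congr rfl fun j _ => by ring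
    rw [hquad]
    exact hT.inner_nonneg_left _

end ContinuousLinearMap

namespace Matrix.PosSemidef

variable {ι 𝕜 : Type*} [Fintype ι] [RCLike 𝕜]

theorem map_pow {A : Matrix ι ι 𝕜} (hA : A.PosSemidef) (k : ℕ) :
    (A.map (· ^ k)).PosSemidef := by
  induction k with
  | zero =>
    convert posSemidef_vecMulVec_self_star (fun _ : ι => (1 : 𝕜))
    ext; simp [vecMulVec_apply]
  | succ k ih =>
    convert ih.hadamard hA using 1
    ext; simp [pow_succ]

theorem map_ofReal {A : Matrix ι ι ℝ} (hA : A.PosSemidef) :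
    (A.map ((↑) : ℝ → 𝕜)).PosSemidef := by
  classical
  open scoped MatrixOrder in
  obtain ⟨B, rfl⟩ := CStarAlgebra.nonneg_iff_eq_star_mul_self.mp hA.nonneg
  have h := posSemidef_conjTranspose_mul_self (B.map (algebraMap ℝ 𝕜))
  rwa [← conjTranspose_map _ fun _ => by simp, ← Matrix.map_mul,
    RCLike.algebraMap_eq_ofReal] at h

theorem map_exp {A : Matrix ι ι ℝ} (hA : A.PosSemidef) : (A.map Real.exp).PosSemidef := by
  refine .of_dotProduct_mulVec_nonneg (hA.isHermitian.map _ fun _ => rfl) fun x => ?_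
  have hquad (B : Matrix ι ι ℝ) : star x ⬝ᵥ B *ᵥ x = ∑ i, ∑ j, x i * B i j * x j := by
    simp only [dotProduct, mulVec, star_trivial, Finset.mul_sum, mul_assoc]
  have hsum : HasSum (fun k => star x ⬝ᵥ A.map (· ^ k) *ᵥ x / k.factorial)
      (star x ⬝ᵥ A.map Real.exp *ᵥ x) := by
    simp only [hquad, map_apply, Finset.sum_div, mul_div_right_comm _ (x _), mul_div_assoc]
    exact hasSum_sum fun i _ => hasSum_sum fun j _ => Real.exp_eq_exp_ℝ ▸
      ((NormedSpace.expSeries_div_hasSum_exp (A i j)).mul_left (x i)).mul_right (x j)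
  exact hsum.nonneg fun k => div_nonneg ((hA.map_pow k).dotProduct_mulVec_nonneg x) (by positivity)

theorem sum_mul_conj_mul_nonneg {K : Matrix ι ι 𝕜} (hK : K.PosSemidef) (α : ι → 𝕜) :
    0 ≤ ∑ i, ∑ j, α i * conj (α j) * K i j := by
  convert hK.dotProduct_mulVec_nonneg (star α) using 1
  simp only [dotProduct, mulVec, Finset.mul_sum, Pi.star_apply, RCLike.star_def, RCLike.conj_conj]
  exact Finset.sum_congr rfl fun i _ => Finset.sum_congr rfl fun j _ => by ring

end Matrix.PosSemidef

section GaussianKernel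

variable {V : Type*} [NormedAddCommGroup V] [InnerProductSpace ℝ V]

theorem LinearMap.IsSymmetric.inner_map_sub_sub {T : V →ₗ[ℝ] V} (hT : T.IsSymmetric) (x y : V) :
    ⟪T (x - y), x - y⟫_ℝ = ⟪T x, x⟫_ℝ - 2 * ⟪T x, y⟫_ℝ + ⟪T y, y⟫_ℝ := by
  rw [map_sub, inner_sub_left, inner_sub_right, inner_sub_right, hT y x, real_inner_comm (T x) y]
  ring

theorem ContinuousLinearMap.IsPositive.posSemidef_exp_neg_half_inner_sub {ι : Type*} [Fintype ι]
    {T : V →L[ℝ] V} (hT : T.IsPositive) (ξ : ι → V) :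
    (Matrix.of fun i j => Real.exp (-(1 / 2) * ⟪T (ξ i - ξ j), ξ i - ξ j⟫_ℝ)).PosSemidef := by
  classical
  let M : Matrix ι ι ℝ := .of fun i j => ⟪T (ξ i), ξ j⟫_ℝ
  let D : Matrix ι ι ℝ := diagonal fun i => Real.exp (-(1 / 2) * M i i)
  have hfactor : Matrix.of (fun i j => Real.exp (-(1 / 2) * ⟪T (ξ i - ξ j), ξ i - ξ j⟫_ℝ))
      = Dᴴ * M.map Real.exp * D := by
    ext i j
    have hsub : ⟪T (ξ i - ξ j), ξ i - ξ j⟫_ℝ = M i i - 2 * M i j + M j j :=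
      hT.isSymmetric.inner_map_sub_sub _ _
    simp only [D, of_apply, hsub, diagonal_conjTranspose, star_trivial, diagonal_mul,
      mul_diagonal, map_apply, ← Real.exp_add]
    congr 1
    ring
  rw [hfactor]
  exact (hT.posSemidef_of_inner ξ).map_exp.conjTranspose_mul_mul_same D

end GaussianKernel

theorem gaussian_characteristic_positive_definite_general
    {V : Type*} [NormedAddCommGroup V] [InnerProductSpace ℝ V]
    (Λ Λinv : V →L[ℝ] V)
    (hsym : ∀ x y : V, ⟪Λ x, y⟫_ℝ = ⟪x, Λ y⟫_ℝ)
    (m : ℝ) (hm : 0 < m)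
    (hpos : ∀ x : V, m * ‖x‖ ^ 2 ≤ ⟪Λ x, x⟫_ℝ)
    (hinv₁ : Λ.comp Λinv = ContinuousLinearMap.id ℝ V) :
    ∀ (n : ℕ) (ξ : Fin n → V) (α : Fin n → ℂ),
      ∃ r : ℝ, 0 ≤ r ∧
        (∑ i, ∑ j, α i * conj (α j) *
          (Real.exp (-(1 / 2) * ⟪Λinv (ξ i - ξ j), ξ i - ξ j⟫_ℝ) : ℝ)) = (r : ℂ) := by
  intro n ξ α
  have hΛ : Λ.IsPositive :=
    (Λ.isPositive_iff).2 ⟨hsym, fun x => (mul_nonneg hm.le (sq_nonneg ‖x‖)).trans (hpos x)⟩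
  have hK := ((hΛ.of_comp_eq_id hinv₁).posSemidef_exp_neg_half_inner_sub ξ).map_ofReal (𝕜 := ℂ)
  obtain ⟨r, hr, hsum⟩ := RCLike.nonneg_iff_exists_ofReal.mp (hK.sum_mul_conj_mul_nonneg α)
  exact ⟨r, hr, by simpa using hsum.symm⟩

/-- if `Λ` is a bounded positive self-adjoint operator with
bounded inverse `Λinv` on a real inner product space `V`, then
`C(ξ) = exp(-½⟨Λ⁻¹ξ, ξ⟩)` is positive definite: for any `ξ₁, …, ξₙ ∈ V` and
`α₁, …, αₙ ∈ ℂ` we have `Σᵢⱼ αᵢ conj(αⱼ) C(ξᵢ - ξⱼ) ≥ 0` (the sum is a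
nonnegative real number). -/
theorem gaussian_characteristic_positive_definite
    {V : Type*} [NormedAddCommGroup V] [InnerProductSpace ℝ V]
    (Λ Λinv : V →L[ℝ] V)
    (hsym : ∀ x y : V, ⟪Λ x, y⟫_ℝ = ⟪x, Λ y⟫_ℝ)
    (m : ℝ) (hm : 0 < m)
    (hpos : ∀ x : V, m * ‖x‖ ^ 2 ≤ ⟪Λ x, x⟫_ℝ)
    (hinv₁ : Λ.comp Λinv = ContinuousLinearMap.id ℝ V)
    (hinv₂ : Λinv.comp Λ = ContinuousLinearMap.id ℝ V) :
    ∀ (n : ℕ) (ξ : Fin n → V) (α : Fin n → ℂ),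
      ∃ r : ℝ, 0 ≤ r ∧
        (∑ i, ∑ j, α i * conj (α j) *
          (Real.exp (-(1 / 2) * ⟪Λinv (ξ i - ξ j), ξ i - ξ j⟫_ℝ) : ℝ)) = (r : ℂ) :=
  gaussian_characteristic_positive_definite_general Λ Λinv hsym m hm hpos hinv₁
end
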